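/- arXiv:2605.12390 — 2 statements merged into one kernel-verified Lean document; each statement's English description precedes it below -/
import Mathlib

section
/- There is no integer x with gcd(x, 81) = 1 such that the reflexive modular reduction of x·{1, 3, 26, 28} modulo 81 equals {3, 10, 17, 37}. -/
/-- Reflexive modular reduction of `r` modulo `n`: `min (r mod n, n - r mod n)`. -/
def reflRed (n : ℕ) (r : ℤ) : ℤ := min (r % (n : ℤ)) ((n : ℤ) - r % (n : ℤ))

/-- Reflexive reduction of the set `x • R` modulo `n`. -/
def reflRedSet (n : ℕ) (x : ℤ) (R : Finset ℤ) : Finset ℤ :=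
  R.image (fun r => reflRed n (x * r))

/-- The circulant graph `C_n(S)` on `ZMod n`. -/
def circulant (n : ℕ) (S : Finset ℤ) : SimpleGraph (ZMod n) where
  Adj a b := a ≠ b ∧ ∃ s ∈ S, a - b = (s : ZMod n) ∨ a - b = -(s : ZMod n)
  symm := by
    constructor
    rintro a b ⟨hab, s, hs, h⟩
    refine ⟨hab.symm, s, hs, ?_⟩
    have hba : b - a = -(a - b) := (neg_sub a b).symm
    rcases h with h | h
    · right; rw [hba, h]
    · left; rw [hba, h, neg_neg]
  loopless := by constructor; rintro a ⟨h, -⟩; exact h rfl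

/-!
Only the images of `1` and `3` are needed. Since `reflRed n r` depends only on `±r mod n` and is
itself `≡ ±r`, we get `reflRed n (3 * x) = reflRed n (3 * reflRed n x)`. If `reflRed 81 x = t`
lies in `{3, 10, 17, 37}`, then `3 * t` reduces to `9` or `30`, which is not in that set,
whereas `reflRed 81 (3 * x)` must be.
-/

theorem reflRed_neg (n : ℕ) (r : ℤ) : reflRed n (-r) = reflRed n r := by
  unfold reflRed
  rw [Int.neg_emod]
  split_ifs with hdvd
  · simp [Int.emod_eq_zero_of_dvd hdvd]
  · rw [Int.natAbs_natCast, sub_sub_cancel, min_comm]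

theorem reflRed_congr {n : ℕ} {r s : ℤ} (h : r ≡ s [ZMOD n]) : reflRed n r = reflRed n s := by
  unfold reflRed
  rw [h.eq]

theorem reflRed_modEq_or_modEq_neg (n : ℕ) (r : ℤ) :
    reflRed n r ≡ r [ZMOD n] ∨ reflRed n r ≡ -r [ZMOD n] := by
  unfold reflRed
  rcases min_choice (r % n) (n - r % n) with h | h <;> rw [h]
  · exact .inl (Int.mod_modEq r n)
  · refine .inr ?_
    simpa using (Int.modEq_zero_iff_dvd.mpr (dvd_refl (n : ℤ))).sub (Int.mod_modEq r n)

theorem reflRed_mul_reflRed (n : ℕ) (c r : ℤ) :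
    reflRed n (c * reflRed n r) = reflRed n (c * r) := by
  rcases reflRed_modEq_or_modEq_neg n r with h | h
  · exact reflRed_congr (h.mul_left c)
  · rw [reflRed_congr (h.mul_left c), mul_neg, reflRed_neg]

theorem reflRed_mem_reflRedSet {n : ℕ} {R : Finset ℤ} {r : ℤ} (x : ℤ) (hr : r ∈ R) :
    reflRed n (x * r) ∈ reflRedSet n x R :=
  Finset.mem_image_of_mem _ hr

theorem reflRed_three_mul_not_mem :
    ∀ t ∈ ({3, 10, 17, 37} : Finset ℤ), reflRed 81 (3 * t) ∉ ({3, 10, 17, 37} : Finset ℤ) := by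
  decide

theorem stmt12 :
    ¬ ∃ x : ℤ, Int.gcd x 81 = 1 ∧
      reflRedSet 81 x ({1, 3, 26, 28} : Finset ℤ) = {3, 10, 17, 37} := by
  rintro ⟨x, -, hx⟩
  have hx_one : reflRed 81 x ∈ ({3, 10, 17, 37} : Finset ℤ) := by
    rw [← mul_one x, ← hx]
    exact reflRed_mem_reflRedSet x (by simp)
  have hx_three : reflRed 81 (3 * reflRed 81 x) ∈ ({3, 10, 17, 37} : Finset ℤ) := by
    rw [reflRed_mul_reflRed, mul_comm, ← hx]
    exact reflRed_mem_reflRedSet x (by simp)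
  exact reflRed_three_mul_not_mem _ hx_one hx_three
end

section
/- The orbit of {1, 2, 47} under S ↦ reflexive reduction of x·S modulo 96, as x ranges over integers coprime to 96, consists of exactly the eight sets {1,2,47}, {5,10,43}, {7,14,41}, {11,22,37}, {13,26,35}, {17,31,34}, {19,29,38}, {23,25,46}. -/
/-! The reduced set `reflRedSet n x R` depends on `x` only through `x % n`, and `x % n` is
coprime to `n` exactly when `x` is, so the orbit is the image of the finitely many units
`m < n`. For `n = 96` the resulting equality of finite sets is checked by `decide`. -/

theorem reflRed_emod (n : ℕ) (r : ℤ) : reflRed n (r % n) = reflRed n r := by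
  simp only [reflRed, Int.emod_emod]

theorem reflRedSet_emod (n : ℕ) (x : ℤ) (R : Finset ℤ) :
    reflRedSet n (x % n) R = reflRedSet n x R := by
  refine Finset.image_congr fun r _ => ?_
  rw [← reflRed_emod, (Int.mod_modEq x n).mul_right r, reflRed_emod]

theorem setOf_reflRedSet_coprime_eq_image_range (n : ℕ) (hn : 0 < n) (R : Finset ℤ) :
    {S | ∃ x : ℤ, Int.gcd x n = 1 ∧ S = reflRedSet n x R} =
      ((Finset.range n).filter (Nat.Coprime · n)).image (fun m : ℕ => reflRedSet n m R) := by
  ext S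
  simp only [Set.mem_ofPred_eq, Finset.coe_image, Finset.coe_filter, Finset.mem_range,
    Set.mem_image]
  constructor
  · rintro ⟨x, hx, rfl⟩
    have hn' : (0 : ℤ) < n := by exact_mod_cast hn
    have hx_nonneg := Int.emod_nonneg x hn'.ne'
    refine ⟨(x % n).toNat, ⟨?_, ?_⟩, ?_⟩
    · have := Int.emod_lt_of_pos x hn'
      omega
    · rw [Nat.Coprime, ← Int.gcd_natCast_natCast, Int.toNat_of_nonneg hx_nonneg, Int.gcd_emod, hx]
    · rw [Int.toNat_of_nonneg hx_nonneg, reflRedSet_emod]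
  · rintro ⟨m, ⟨-, hm⟩, rfl⟩
    exact ⟨m, by rwa [Int.gcd_natCast_natCast], rfl⟩

theorem stmt17 :
    {S : Finset ℤ | ∃ x : ℤ, Int.gcd x 96 = 1 ∧ S = reflRedSet 96 x ({1, 2, 47} : Finset ℤ)} =
      {({1, 2, 47} : Finset ℤ), {5, 10, 43}, {7, 14, 41}, {11, 22, 37}, {13, 26, 35},
        {17, 31, 34}, {19, 29, 38}, {23, 25, 46}} := by
  have h := setOf_reflRedSet_coprime_eq_image_range 96 (by norm_num) {1, 2, 47}
  rw [Nat.cast_ofNat] at h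
  rw [h]
  simp only [← Finset.coe_singleton, ← Finset.coe_insert, Finset.coe_inj]
  decide
end
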